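/- arXiv:2107.09745 — 4 statements merged into one kernel-verified Lean document; each statement's English description precedes it below -/
import Mathlib

section
/- Let n ≥ 1, let x be a schedule, and let r : Fin n → ℝ be release dates with r j ≥ 0 for all j. Then there exist a machine i with job sequence j_1, …, j_{n_i} and a position k with 1 ≤ k ≤ n_i such that, writing j = j_k, one has C_{i,k−1}(x,r) ≤ r j and C_max(x,r) = r j + ∑_{l=k}^{n_i} p i j_l; that is, the makespan equals the release date of some critical job plus the total processing time of that job and all jobs following it on its machine. -/
open Finset

/-- A schedule assigns to each machine a finite sequence of jobs such that
every job occurs exactly once among all the sequences. -/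
structure Schedule (m n : ℕ) where
  seq : Fin m → List (Fin n)
  valid : ∀ j : Fin n, (∑ i : Fin m, (seq i).count j) = 1

variable {m n : ℕ}

/-- Completion time after processing the list `L` of jobs on a machine with
processing times `q` and release dates `r`; recursively `C₀ = 0`,
`C_k = q j_k + max C_{k-1} (r j_k)`. -/
def mComp (q r : Fin n → ℝ) (L : List (Fin n)) : ℝ :=
  L.foldl (fun c j => q j + max c (r j)) 0

/-- Makespan of the schedule `x` under the release dates `r`. -/
noncomputable def Cmax (p : Fin m → Fin n → ℝ) (x : Schedule m n) (r : Fin n → ℝ) : ℝ :=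
  ⨆ i : Fin m, mComp (p i) r (x.seq i)

/-- Optimal makespan `C*(r)`: the minimum of `Cmax` over all schedules. -/
noncomputable def Cstar (p : Fin m → Fin n → ℝ) (r : Fin n → ℝ) : ℝ :=
  ⨅ x : Schedule m n, Cmax p x r

/-- Regret of schedule `x` under scenario `r`. -/
noncomputable def regret (p : Fin m → Fin n → ℝ) (x : Schedule m n) (r : Fin n → ℝ) : ℝ :=
  Cmax p x r - Cstar p r

/-- The scenario box determined by the interval bounds. -/
def box (rlo rhi : Fin n → ℝ) : Set (Fin n → ℝ) :=
  {r | ∀ j, rlo j ≤ r j ∧ r j ≤ rhi j}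

/-- Worst-case regret `Z(x)`. -/
noncomputable def Zreg (p : Fin m → Fin n → ℝ) (x : Schedule m n) (rlo rhi : Fin n → ℝ) : ℝ :=
  sSup ((fun r => regret p x r) '' box rlo rhi)

/-- Extreme scenario `r̄^j`. -/
def extSc (rlo rhi : Fin n → ℝ) (j : Fin n) : Fin n → ℝ :=
  Function.update rlo j (rhi j)

/-- The set `H(x)` of jobs whose release interval is covered by the
processing of their predecessors (positions are 0-indexed: job at position
`k ≥ 1` has predecessors `(x.seq i).take k`). -/
def Hset (p : Fin m → Fin n → ℝ) (rlo rhi : Fin n → ℝ) (x : Schedule m n) : Set (Fin n) :=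
  {j | ∃ i : Fin m, ∃ k : ℕ, 1 ≤ k ∧ (x.seq i)[k]? = some j ∧
    rhi j ≤ mComp (p i) rlo ((x.seq i).take k)}

/-- Lower bound `LB₁(r) = max_j (r j + min_i p i j)`. -/
noncomputable def LB1 (p : Fin m → Fin n → ℝ) (r : Fin n → ℝ) : ℝ :=
  ⨆ j : Fin n, (r j + ⨅ i : Fin m, p i j)

/-- Lower bound `LB(r) = min_j r j + m⁻¹ ∑_j min_i p i j`. -/
noncomputable def LB0 (p : Fin m → Fin n → ℝ) (r : Fin n → ℝ) : ℝ :=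
  (⨅ j : Fin n, r j) + (m : ℝ)⁻¹ * ∑ j : Fin n, ⨅ i : Fin m, p i j

/-- `E_j(r)`: the jobs unavailable before `j`. -/
noncomputable def Ej (r : Fin n → ℝ) (j : Fin n) : Finset (Fin n) :=
  Finset.univ.filter fun t => r j ≤ r t

lemma Ej_nonempty (r : Fin n → ℝ) (j : Fin n) : (Ej r j).Nonempty :=
  ⟨j, by simp [Ej]⟩

/-- `W_j(E_j(r), p)` from the paper. -/
noncomputable def W2 (p : Fin m → Fin n → ℝ) (r : Fin n → ℝ) (j : Fin n) : ℝ :=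
  (Ej r j).inf' (Ej_nonempty r j) r + (m : ℝ)⁻¹ * ∑ t ∈ Ej r j, ⨅ i : Fin m, p i t

/-- Lower bound `LB₂(r)`. -/
noncomputable def LB2 (p : Fin m → Fin n → ℝ) (r : Fin n → ℝ) : ℝ :=
  ⨆ j : Fin n, W2 p r j

/-- `W̃_j(E_j(r), p_w)` from the paper, with `λ_j = ⌈|E_j(r)|/m⌉`. -/
noncomputable def W3 (p : Fin m → Fin n → ℝ) (r : Fin n → ℝ) (j : Fin n) : ℝ :=
  (Ej r j).inf' (Ej_nonempty r j) r +
    (⌈((Ej r j).card : ℝ) / (m : ℝ)⌉ : ℝ) *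
      (Ej r j).inf' (Ej_nonempty r j) (fun t => ⨅ i : Fin m, p i t)

/-- Lower bound `LB₃(r)`. -/
noncomputable def LB3 (p : Fin m → Fin n → ℝ) (r : Fin n → ℝ) : ℝ :=
  ⨆ j : Fin n, W3 p r j

/-- The combined lower bound `LB(r̄) = max {LB₁, LB₂, LB₃}`. -/
noncomputable def LBall (p : Fin m → Fin n → ℝ) (r : Fin n → ℝ) : ℝ :=
  max (LB1 p r) (max (LB2 p r) (LB3 p r))


section mComp

variable (q r : Fin n → ℝ)

@[simp]
lemma mComp_nil : mComp q r [] = 0 := rfl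

lemma mComp_concat (L : List (Fin n)) (j : Fin n) :
    mComp q r (L ++ [j]) = q j + max (mComp q r L) (r j) :=
  List.foldl_concat _ _ _ _

/-- Take the last job that starts at its release date rather than at its predecessor's
completion: from then on the machine is never idle. Such a job exists since the machine starts
at time `0 ≤ r`. -/
lemma exists_critical_job (hr : ∀ j, 0 ≤ r j) (L : List (Fin n)) (hL : L ≠ []) :
    ∃ k : ℕ, ∃ h : k < L.length, mComp q r (L.take k) ≤ r (L.get ⟨k, h⟩) ∧
      mComp q r L = r (L.get ⟨k, h⟩) + ((L.drop k).map q).sum := by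
  induction L using List.reverseRecOn with
  | nil => exact absurd rfl hL
  | append_singleton L j ih =>
    rcases le_or_gt (mComp q r L) (r j) with hidle | hbusy
    · refine ⟨L.length, by simp, ?_, ?_⟩ <;>
        simp only [List.get_eq_getElem, List.getElem_concat_length, List.take_left, List.drop_left]
      · exact hidle
      · simp [mComp_concat, max_eq_right hidle, add_comm]
    · have hL' : L ≠ [] := by
        rintro rfl
        exact (hr j).not_gt hbusy
      obtain ⟨k, hk, hcrit, heq⟩ := ih hL'
      refine ⟨k, by simp; omega, ?_, ?_⟩ <;>
        simp only [List.get_eq_getElem, List.getElem_append_left hk,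
          List.take_append_of_le_length hk.le, List.drop_append_of_le_length hk.le]
      · exact hcrit
      · rw [mComp_concat, max_eq_left hbusy.le, heq, List.get_eq_getElem]
        simp only [List.map_append, List.sum_append, List.map_cons, List.map_nil, List.sum_singleton]
        ring

lemma mComp_pos (hq : ∀ j, 0 < q j) (hr : ∀ j, 0 ≤ r j) {L : List (Fin n)} (hL : L ≠ []) :
    0 < mComp q r L := by
  obtain ⟨k, hk, -, heq⟩ := exists_critical_job q r hr L hL
  have hsum : 0 < ((L.drop k).map q).sum :=
    List.sum_pos _ (fun _ hx => by obtain ⟨a, -, rfl⟩ := List.mem_map.mp hx; exact hq a)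
      (by simpa using hk)
  rw [heq]
  exact add_pos_of_nonneg_of_pos (hr _) hsum

end mComp

lemma Schedule.exists_mem_seq (x : Schedule m n) (j : Fin n) : ∃ i, j ∈ x.seq i := by
  obtain ⟨i, -, hi⟩ := Finset.exists_ne_zero_of_sum_ne_zero (by rw [x.valid j]; exact one_ne_zero)
  exact ⟨i, List.count_pos_iff.mp (Nat.pos_of_ne_zero hi)⟩

/-- Positions are 0-indexed: the critical job sits at position `k`, its predecessors are
`(x.seq i).take k`, and the jobs from it onward are `(x.seq i).drop k`. -/
theorem makespan_critical_job {m n : ℕ} (hm : 0 < m) (hn : 1 ≤ n)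
    (p : Fin m → Fin n → ℝ) (hp : ∀ i j, 0 < p i j)
    (x : Schedule m n) (r : Fin n → ℝ) (hr : ∀ j, 0 ≤ r j) :
    ∃ i : Fin m, ∃ k : ℕ, ∃ h : k < (x.seq i).length,
      mComp (p i) r ((x.seq i).take k) ≤ r ((x.seq i).get ⟨k, h⟩) ∧
      Cmax p x r =
        r ((x.seq i).get ⟨k, h⟩) + (((x.seq i).drop k).map (p i)).sum := by
  have : Nonempty (Fin m) := ⟨⟨0, hm⟩⟩
  obtain ⟨i, hi⟩ : ∃ i, mComp (p i) r (x.seq i) = Cmax p x r := exists_eq_ciSup_of_finite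
  obtain ⟨i₁, hi₁⟩ := x.exists_mem_seq ⟨0, hn⟩
  have hne : x.seq i ≠ [] := by
    intro hnil
    have hpos := mComp_pos (p i₁) r (hp i₁) hr (List.ne_nil_of_mem hi₁)
    have hle : mComp (p i₁) r (x.seq i₁) ≤ mComp (p i) r (x.seq i) := by
      rw [hi]
      exact le_ciSup (Finite.bddAbove_range fun i => mComp (p i) r (x.seq i)) i₁
    rw [hnil, mComp_nil] at hle
    linarith
  obtain ⟨k, hk, hcrit, heq⟩ := exists_critical_job (p i) r hr (x.seq i) hne
  exact ⟨i, k, hk, hcrit, by rw [← hi, heq]⟩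
end

section
/- Let n ≥ 1, let x be a schedule, and let r, r' : Fin n → ℝ be release-date vectors with r j ≥ 0 and r' j ≥ 0 for all j. Then the makespan is 1-Lipschitz in the release dates with respect to the supremum norm: |C_max(x,r) − C_max(x,r')| ≤ max over j of |r j − r' j|. -/
open Finset

variable {m n : ℕ}

/-! Each step `c ↦ q j + max c (r j)` of the recursion for a machine's completion time is
1-Lipschitz jointly in `c` and in `r` for the sup norm, so by induction along the job sequence
every completion time is 1-Lipschitz in `r`, and so is their maximum, the makespan. The sup norm
on `Fin n → ℝ` is the metric `dist` of the product space. -/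

theorem Real.iSup_le_iSup_add_of_le_add {ι : Type*} [Finite ι] {f g : ι → ℝ} {d : ℝ}
    (hd : 0 ≤ d) (h : ∀ i, f i ≤ g i + d) : ⨆ i, f i ≤ (⨆ i, g i) + d := by
  cases isEmpty_or_nonempty ι
  · simpa using hd
  · exact ciSup_le fun i => (h i).trans <| by gcongr; exact le_ciSup (Finite.bddAbove_range g) i

theorem LipschitzWith.iSup_real {ι α : Type*} [Finite ι] [PseudoMetricSpace α] {f : ι → α → ℝ}
    (hf : ∀ i, LipschitzWith 1 (f i)) : LipschitzWith 1 fun a => ⨆ i, f i a :=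
  LipschitzWith.of_le_add fun a b =>
    Real.iSup_le_iSup_add_of_le_add dist_nonneg fun i => by simpa using (hf i).le_add_mul a b

theorem lipschitzWith_mComp (q : Fin n → ℝ) (L : List (Fin n)) :
    LipschitzWith 1 fun r => mComp q r L := by
  suffices ∀ c : (Fin n → ℝ) → ℝ, LipschitzWith 1 c →
      LipschitzWith 1 fun r => L.foldl (fun c j => q j + max c (r j)) (c r) from
    this _ (LipschitzWith.const' 0)
  induction L with
  | nil => exact fun c hc => hc
  | cons j L ih =>
    intro c hc
    exact ih _ <| by simpa using (LipschitzWith.const (q j)).add (hc.max (LipschitzWith.eval j))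

theorem lipschitzWith_Cmax (p : Fin m → Fin n → ℝ) (x : Schedule m n) :
    LipschitzWith 1 (Cmax p x) :=
  LipschitzWith.iSup_real fun i => lipschitzWith_mComp (p i) (x.seq i)

theorem makespan_lipschitz_general {m n : ℕ}
    (p : Fin m → Fin n → ℝ)
    (x : Schedule m n) (r r' : Fin n → ℝ) :
    |Cmax p x r - Cmax p x r'| ≤ ⨆ j : Fin n, |r j - r' j| := by
  have hdist : dist r r' ≤ ⨆ j : Fin n, |r j - r' j| :=
    (dist_pi_le_iff (Real.iSup_nonneg fun j => abs_nonneg _)).2 fun j =>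
      (Real.dist_eq _ _).trans_le <| le_ciSup (Finite.bddAbove_range fun j => |r j - r' j|) j
  simpa [Real.dist_eq] using (lipschitzWith_Cmax p x).dist_le_mul_of_le hdist

/-- the makespan is 1-Lipschitz in the release dates with
respect to the supremum norm. -/
theorem makespan_lipschitz {m n : ℕ} (hm : 0 < m) (hn : 1 ≤ n)
    (p : Fin m → Fin n → ℝ) (hp : ∀ i j, 0 < p i j)
    (x : Schedule m n) (r r' : Fin n → ℝ)
    (hr : ∀ j, 0 ≤ r j) (hr' : ∀ j, 0 ≤ r' j) :
    |Cmax p x r - Cmax p x r'| ≤ ⨆ j : Fin n, |r j - r' j| :=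
  makespan_lipschitz_general p x r r'
end

section
/- (Paper's Proposition.) Let x be a schedule and let j be a job that belongs to H(x), i.e. j occupies some position k ≥ 2 on some machine i in x and C_{i,k−1}(x, r⁻) ≥ r⁺ j. Then C_max(x, r̄^j) = C_max(x, r⁻) and Q(x, r̄^j) ≤ Q(x, r⁻), where r⁻ denotes the all-lower-bounds scenario. -/
open Finset

variable {m n : ℕ}

/-!
Within a machine sequence, the release date of a job only enters through the term
`max C_{k-1} (r j_k)`. For `j ∈ H(x)` the predecessors of `j` already finish at a time
`C_{k-1}(x, r⁻) ≥ r⁺ j`, so raising `r j` from `r⁻ j` to `r⁺ j` does not change that maximum;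
since `j` occurs only once in `x`, no other completion time on any machine changes either.
Hence `C_max(x, r̄^j) = C_max(x, r⁻)`, while `C*` is monotone in the release dates because each
`C_max(y, ·)` is, so the regret can only decrease.
-/

open Function

def mCompFrom (q r : Fin n → ℝ) (c : ℝ) (L : List (Fin n)) : ℝ :=
  L.foldl (fun c j => q j + max c (r j)) c

section MachineCompletion

variable {q r r' : Fin n → ℝ}

lemma mComp_eq_mCompFrom (L : List (Fin n)) : mComp q r L = mCompFrom q r 0 L := rfl

lemma mCompFrom_append (c : ℝ) (L L' : List (Fin n)) :
    mCompFrom q r c (L ++ L') = mCompFrom q r (mCompFrom q r c L) L' :=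
  List.foldl_append

lemma mCompFrom_cons (c : ℝ) (a : Fin n) (L : List (Fin n)) :
    mCompFrom q r c (a :: L) = mCompFrom q r (q a + max c (r a)) L := rfl

lemma mCompFrom_congr {L : List (Fin n)} (h : ∀ a ∈ L, r a = r' a) (c : ℝ) :
    mCompFrom q r c L = mCompFrom q r' c L := by
  induction L generalizing c with
  | nil => rfl
  | cons a L ih =>
    rw [mCompFrom_cons, mCompFrom_cons, h a List.mem_cons_self,
      ih fun b hb => h b (List.mem_cons_of_mem a hb)]

lemma mCompFrom_mono (h : r ≤ r') {c c' : ℝ} (hc : c ≤ c') (L : List (Fin n)) :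
    mCompFrom q r c L ≤ mCompFrom q r' c' L := by
  induction L generalizing c c' with
  | nil => exact hc
  | cons a L ih => exact ih (add_le_add_right (max_le_max hc (h a)) _)

lemma le_mCompFrom (hq : 0 ≤ q) (c : ℝ) (L : List (Fin n)) : c ≤ mCompFrom q r c L := by
  induction L generalizing c with
  | nil => exact le_rfl
  | cons a L ih => exact (le_add_of_nonneg_of_le (hq a) (le_max_left c (r a))).trans (ih _)

lemma mComp_mono (h : r ≤ r') (L : List (Fin n)) : mComp q r L ≤ mComp q r' L :=
  mCompFrom_mono h le_rfl L

lemma mComp_nonneg (hq : 0 ≤ q) (L : List (Fin n)) : 0 ≤ mComp q r L :=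
  le_mCompFrom hq 0 L

lemma mComp_update_of_notMem {j : Fin n} {L : List (Fin n)} (hj : j ∉ L) (s : ℝ) :
    mComp q (update r j s) L = mComp q r L :=
  mCompFrom_congr (fun _ ha => update_of_ne (ne_of_mem_of_not_mem ha hj) _ _) 0

lemma mComp_update_append_cons {j : Fin n} {A B : List (Fin n)} (hA : j ∉ A) (hB : j ∉ B)
    {s : ℝ} (hs : s ≤ mComp q r A) (hr : r j ≤ mComp q r A) :
    mComp q (update r j s) (A ++ j :: B) = mComp q r (A ++ j :: B) := by
  have hstart : mComp q (update r j s) A = mComp q r A := mComp_update_of_notMem hA s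
  simp only [mComp_eq_mCompFrom, mCompFrom_append, mCompFrom_cons] at hstart hs hr ⊢
  rw [hstart, update_self, max_eq_left hs, max_eq_left hr]
  exact mCompFrom_congr (fun _ ha => update_of_ne (ne_of_mem_of_not_mem ha hB) _ _) _

lemma mComp_update_of_getElem? {j : Fin n} {L : List (Fin n)} {k : ℕ} (hget : L[k]? = some j)
    (hcount : L.count j = 1) {s : ℝ} (hs : s ≤ mComp q r (L.take k))
    (hr : r j ≤ mComp q r (L.take k)) :
    mComp q (update r j s) L = mComp q r L := by
  obtain ⟨hk, hkj⟩ := List.getElem?_eq_some_iff.mp hget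
  have hsplit : L = L.take k ++ j :: L.drop (k + 1) := by
    rw [← hkj, ← List.drop_eq_getElem_cons hk, List.take_append_drop]
  rw [hsplit, List.count_append, List.count_cons_self] at hcount
  rw [hsplit]
  exact mComp_update_append_cons (List.count_eq_zero.mp (by omega))
    (List.count_eq_zero.mp (by omega)) hs hr

end MachineCompletion

namespace Schedule

variable (x : Schedule m n) {i i' : Fin m} {j : Fin n}

lemma count_eq_one_of_mem (hj : j ∈ x.seq i) : (x.seq i).count j = 1 :=
  le_antisymm
    ((Finset.single_le_sum (fun _ _ => Nat.zero_le _) (Finset.mem_univ i)).trans_eq (x.valid j))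
    (List.count_pos_iff.mpr hj)

lemma eq_of_mem_of_mem (hi : j ∈ x.seq i) (hi' : j ∈ x.seq i') : i = i' := by
  by_contra hne
  have hpair := Finset.sum_le_sum_of_subset (f := fun i => (x.seq i).count j)
    (Finset.subset_univ {i, i'})
  rw [Finset.sum_pair hne, x.valid j] at hpair
  have := List.count_pos_iff.mpr hi
  have := List.count_pos_iff.mpr hi'
  omega

end Schedule

lemma Cmax_mono (p : Fin m → Fin n → ℝ) (x : Schedule m n) {r r' : Fin n → ℝ} (h : r ≤ r') :
    Cmax p x r ≤ Cmax p x r' :=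
  ciSup_mono (Set.finite_range _).bddAbove fun _ => mComp_mono h _

lemma Cstar_mono {p : Fin m → Fin n → ℝ} (hp : ∀ i j, 0 ≤ p i j) {r r' : Fin n → ℝ}
    (h : r ≤ r') : Cstar p r ≤ Cstar p r' :=
  ciInf_mono ⟨0, Set.forall_mem_range.mpr fun _ => Real.iSup_nonneg fun i => mComp_nonneg (hp i) _⟩
    fun x => Cmax_mono p x h

lemma le_extSc {rlo rhi : Fin n → ℝ} {j : Fin n} (h : rlo j ≤ rhi j) : rlo ≤ extSc rlo rhi j := by
  intro t
  rcases eq_or_ne t j with rfl | ht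
  · simpa [extSc] using h
  · simp [extSc, ht]

lemma Cmax_extSc_of_mem_Hset {p : Fin m → Fin n → ℝ} {rlo rhi : Fin n → ℝ}
    {x : Schedule m n} {j : Fin n} (hj : j ∈ Hset p rlo rhi x) (hlt : rlo j ≤ rhi j) :
    Cmax p x (extSc rlo rhi j) = Cmax p x rlo := by
  obtain ⟨i, k, -, hget, hC⟩ := hj
  have hmem : j ∈ x.seq i := List.mem_of_getElem? hget
  refine iSup_congr fun i' => ?_
  by_cases hi' : j ∈ x.seq i'
  · obtain rfl := x.eq_of_mem_of_mem hmem hi'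
    exact mComp_update_of_getElem? hget (x.count_eq_one_of_mem hmem) hC (hlt.trans hC)
  · exact mComp_update_of_notMem hi' _

theorem Hset_scenario_dominated_general {m n : ℕ}
    (p : Fin m → Fin n → ℝ) (hp : ∀ i j, 0 < p i j)
    (rlo rhi : Fin n → ℝ) (hlt : ∀ j, rlo j < rhi j)
    (x : Schedule m n) (j : Fin n) (hj : j ∈ Hset p rlo rhi x) :
    Cmax p x (extSc rlo rhi j) = Cmax p x rlo ∧
      regret p x (extSc rlo rhi j) ≤ regret p x rlo := by
  have hCmax := Cmax_extSc_of_mem_Hset hj (hlt j).le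
  refine ⟨hCmax, ?_⟩
  rw [regret, regret, hCmax]
  exact sub_le_sub_left (Cstar_mono (fun i j => (hp i j).le) (le_extSc (hlt j).le)) _

/-- Paper's Proposition: if `j ∈ H(x)` then the extreme
scenario `r̄^j` yields the same makespan as the all-lower-bounds scenario
`r⁻`, and its regret is no larger. -/
theorem Hset_scenario_dominated {m n : ℕ} (hm : 0 < m)
    (p : Fin m → Fin n → ℝ) (hp : ∀ i j, 0 < p i j)
    (rlo rhi : Fin n → ℝ) (hlo : ∀ j, 0 ≤ rlo j) (hlt : ∀ j, rlo j < rhi j)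
    (x : Schedule m n) (j : Fin n) (hj : j ∈ Hset p rlo rhi x) :
    Cmax p x (extSc rlo rhi j) = Cmax p x rlo ∧
      regret p x (extSc rlo rhi j) ≤ regret p x rlo :=
  Hset_scenario_dominated_general p hp rlo rhi hlt x j hj
end

section
/- (Combined lower bound.) Let n ≥ 1 and let r : Fin n → ℝ with r j ≥ 0 for all j. Then the optimal makespan satisfies C*(r) ≥ max{ LB₁(r), LB₂(r), LB₃(r) }, where LB₁(r) = max_j ( r j + min_i p i j ), LB₂(r) = max over jobs j of ( min over t ∈ E_j(r) of r t + m⁻¹ ∑ over t ∈ E_j(r) of min_i p i t ), and LB₃(r) = max over jobs j of ( min over t ∈ E_j(r) of r t + ⌈|E_j(r)|/m⌉ · min over t ∈ E_j(r) of min_i p i t ), with E_j(r) = { t : r t ≥ r j }. -/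
open Finset

variable {m n : ℕ}

/-!
On any machine, once the first job of a set `E` starts, it starts no earlier than
`min_{t ∈ E} r t`, and from then on the machine is busy for at least the processing times of
all jobs of `E` it carries. Hence the makespan is at least `min_E r` plus the sum of
`min_i' p i' t` over the jobs `t ∈ E` carried by any one machine `i`. Averaging this over
the `m` machines gives `LB₂`; taking the machine carrying the most jobs of `E`, at least
`⌈|E|/m⌉` of them, gives `LB₃`; and `LB₁` is `LB₃` for a singleton `E`.
-/

section OneMachine

variable {q r w : Fin n → ℝ} {E : Finset (Fin n)}

lemma sum_count_cons_mul (j : Fin n) (L : List (Fin n)) :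
    ∑ t ∈ E, ((j :: L).count t : ℝ) * w t =
      ∑ t ∈ E, (L.count t : ℝ) * w t + if j ∈ E then w j else 0 := by
  simp [List.count_cons, add_mul, sum_add_distrib]

lemma add_sum_count_mul_le_foldl (hq : ∀ t, 0 ≤ q t) (hw : ∀ t ∈ E, w t ≤ q t) :
    ∀ (L : List (Fin n)) (c : ℝ),
      c + ∑ t ∈ E, (L.count t : ℝ) * w t ≤ L.foldl (fun c j => q j + max c (r j)) c
  | [], c => by simp
  | j :: L, c => by
    have ih := add_sum_count_mul_le_foldl hq hw L (q j + max c (r j))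
    have hj : (if j ∈ E then w j else 0) ≤ q j := by
      split_ifs with h
      exacts [hw j h, hq j]
    rw [List.foldl_cons, sum_count_cons_mul]
    linarith [le_max_left c (r j)]

lemma add_sum_count_mul_le_foldl_of_exists_mem {ρ : ℝ} (hq : ∀ t, 0 ≤ q t)
    (hw : ∀ t ∈ E, w t ≤ q t) (hρ : ∀ t ∈ E, ρ ≤ r t) :
    ∀ (L : List (Fin n)) (c : ℝ), (∃ t ∈ L, t ∈ E) →
      ρ + ∑ t ∈ E, (L.count t : ℝ) * w t ≤ L.foldl (fun c j => q j + max c (r j)) c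
  | [], _, h => by simp at h
  | j :: L, c, h => by
    rw [List.foldl_cons, sum_count_cons_mul]
    by_cases hj : j ∈ E
    · have := add_sum_count_mul_le_foldl (r := r) hq hw L (q j + max c (r j))
      rw [if_pos hj]
      linarith [hρ j hj, hw j hj, le_max_right c (r j)]
    · obtain ⟨t, ht, htE⟩ := h
      have htL : t ∈ L := (List.mem_cons.mp ht).resolve_left (by rintro rfl; exact hj htE)
      rw [if_neg hj, add_zero]
      exact add_sum_count_mul_le_foldl_of_exists_mem hq hw hρ L _ ⟨t, htL, htE⟩

end OneMachine

namespace Schedule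

lemma exists_mem_seq_s15 (x : Schedule m n) (j : Fin n) : ∃ i, j ∈ x.seq i := by
  by_contra! h
  simpa [List.count_eq_zero.mpr (h _)] using x.valid j

lemma sum_cast_count_seq (x : Schedule m n) (t : Fin n) :
    ∑ i, ((x.seq i).count t : ℝ) = 1 := by
  exact_mod_cast x.valid t

lemma nonempty (hm : 0 < m) : Nonempty (Schedule m n) := by
  refine ⟨⟨fun i => if i = ⟨0, hm⟩ then List.finRange n else [], fun j => ?_⟩⟩
  rw [sum_eq_single (⟨0, hm⟩ : Fin m) (fun i _ hi => by simp [hi]) (by simp)]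
  simp [List.count_eq_one_of_mem (List.nodup_finRange n) (List.mem_finRange j)]

end Schedule

section Bounds

variable {p : Fin m → Fin n → ℝ} {E : Finset (Fin n)}

lemma mComp_le_Cmax (x : Schedule m n) (r : Fin n → ℝ) (i : Fin m) :
    mComp (p i) r (x.seq i) ≤ Cmax p x r :=
  le_ciSup (f := fun i => mComp (p i) r (x.seq i)) (Finite.bddAbove_range _) i

lemma inf'_add_sum_count_mul_le_Cmax (hp : ∀ i j, 0 ≤ p i j) (x : Schedule m n)
    (r : Fin n → ℝ) (hE : E.Nonempty) {w : Fin n → ℝ} (hw : ∀ t ∈ E, ∀ i, w t ≤ p i t)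
    (i : Fin m) :
    E.inf' hE r + ∑ t ∈ E, ((x.seq i).count t : ℝ) * w t ≤ Cmax p x r := by
  have hmachine : ∀ i (w : Fin n → ℝ), (∀ t ∈ E, w t ≤ p i t) → (∃ t ∈ x.seq i, t ∈ E) →
      E.inf' hE r + ∑ t ∈ E, ((x.seq i).count t : ℝ) * w t ≤ Cmax p x r :=
    fun i w hw h => (add_sum_count_mul_le_foldl_of_exists_mem (hp i) hw
      (fun t ht => inf'_le r ht) _ 0 h).trans (mComp_le_Cmax x r i)
  by_cases h : ∃ t ∈ x.seq i, t ∈ E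
  · exact hmachine i w (fun t ht => hw t ht i) h
  -- Otherwise the claim is `min_E r ≤ Cmax`, witnessed by a machine that does carry a job of `E`.
  · have hzero : ∑ t ∈ E, ((x.seq i).count t : ℝ) * w t = 0 :=
      sum_eq_zero fun t ht => by simp [List.count_eq_zero.mpr fun h' => h ⟨t, h', ht⟩]
    obtain ⟨j, hj⟩ := hE
    obtain ⟨i₀, hi₀⟩ := x.exists_mem_seq_s15 j
    simpa [hzero] using hmachine i₀ 0 (fun t _ => hp i₀ t) ⟨j, hi₀, hj⟩

lemma inf'_add_inv_mul_sum_le_Cmax (hm : 0 < m) (hp : ∀ i j, 0 ≤ p i j) (x : Schedule m n)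
    (r : Fin n → ℝ) (hE : E.Nonempty) {w : Fin n → ℝ} (hw : ∀ t ∈ E, ∀ i, w t ≤ p i t) :
    E.inf' hE r + (m : ℝ)⁻¹ * ∑ t ∈ E, w t ≤ Cmax p x r := by
  have hsum : ∑ i : Fin m, ∑ t ∈ E, ((x.seq i).count t : ℝ) * w t = ∑ t ∈ E, w t := by
    rw [sum_comm]
    simp_rw [← sum_mul, x.sum_cast_count_seq, one_mul]
  have hload : ∑ t ∈ E, w t ≤ m * (Cmax p x r - E.inf' hE r) := by
    rw [← hsum]
    calc _ ≤ ∑ _i : Fin m, (Cmax p x r - E.inf' hE r) := sum_le_sum fun i _ => by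
            linarith [inf'_add_sum_count_mul_le_Cmax hp x r hE hw i]
      _ = _ := by rw [sum_const, card_univ, Fintype.card_fin, nsmul_eq_mul]
  have := (inv_mul_le_iff₀ (by exact_mod_cast hm : (0 : ℝ) < m)).mpr hload
  linarith

lemma inf'_add_ceil_mul_le_Cmax (hm : 0 < m) (hp : ∀ i j, 0 ≤ p i j) (x : Schedule m n)
    (r : Fin n → ℝ) (hE : E.Nonempty) {Q : ℝ} (hQ0 : 0 ≤ Q) (hQ : ∀ t ∈ E, ∀ i, Q ≤ p i t) :
    E.inf' hE r + (⌈(#E : ℝ) / m⌉ : ℝ) * Q ≤ Cmax p x r := by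
  have : Nonempty (Fin m) := Fin.pos_iff_nonempty.mp hm
  set N : Fin m → ℕ := fun i => ∑ t ∈ E, (x.seq i).count t
  obtain ⟨i, -, hi⟩ : ∃ i ∈ univ, (#E : ℝ) / m ≤ N i := by
    refine exists_le_of_sum_le univ_nonempty ?_
    have hN : ∑ i, (N i : ℝ) = #E := by
      simp only [N, Nat.cast_sum]
      rw [sum_comm]
      simp [x.sum_cast_count_seq]
    rw [hN, sum_const, card_univ, Fintype.card_fin, nsmul_eq_mul,
      mul_div_cancel₀ _ (by exact_mod_cast hm.ne')]
  have hceil : (⌈(#E : ℝ) / m⌉ : ℝ) ≤ N i := by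
    exact_mod_cast Int.ceil_le.mpr (by exact_mod_cast hi)
  have hmachine := inf'_add_sum_count_mul_le_Cmax hp x r hE hQ i
  rw [← sum_mul] at hmachine
  push_cast [N] at hceil
  linarith [mul_le_mul_of_nonneg_right hceil hQ0]

lemma add_iInf_le_Cmax (hm : 0 < m) (hp : ∀ i j, 0 ≤ p i j) (x : Schedule m n)
    (r : Fin n → ℝ) (j : Fin n) : r j + ⨅ i, p i j ≤ Cmax p x r := by
  have : Nonempty (Fin m) := Fin.pos_iff_nonempty.mp hm
  have hceil : ⌈(m : ℝ)⁻¹⌉ = 1 := by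
    rw [Int.ceil_eq_iff]
    constructor
    · norm_num
      exact hm
    · exact_mod_cast inv_le_one_of_one_le₀ (Nat.one_le_cast.mpr hm : (1 : ℝ) ≤ m)
  simpa [hceil] using inf'_add_ceil_mul_le_Cmax hm hp x r (singleton_nonempty j)
    (le_ciInf fun i => hp i j) fun t ht i => by
      rw [mem_singleton.mp ht]; exact ciInf_le (Finite.bddBelow_range _) i

end Bounds

theorem combined_lower_bound_general {m n : ℕ} (hm : 0 < m) (hn : 1 ≤ n)
    (p : Fin m → Fin n → ℝ) (hp : ∀ i j, 0 < p i j)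
    (r : Fin n → ℝ) :
    max (LB1 p r) (max (LB2 p r) (LB3 p r)) ≤ Cstar p r := by
  have : Nonempty (Fin m) := Fin.pos_iff_nonempty.mp hm
  have : Nonempty (Fin n) := Fin.pos_iff_nonempty.mp hn
  have : Nonempty (Schedule m n) := Schedule.nonempty hm
  have hp₀ : ∀ i j, 0 ≤ p i j := fun i j => (hp i j).le
  have hmin : ∀ t i, ⨅ i', p i' t ≤ p i t := fun t i => ciInf_le (Finite.bddBelow_range _) i
  refine le_ciInf fun x => max_le ?_ (max_le ?_ ?_) <;> refine ciSup_le fun j => ?_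
  · exact add_iInf_le_Cmax hm hp₀ x r j
  · exact inf'_add_inv_mul_sum_le_Cmax hm hp₀ x r _ fun t _ => hmin t
  · exact inf'_add_ceil_mul_le_Cmax hm hp₀ x r _ (le_inf' _ _ fun t _ => le_ciInf (hp₀ · t))
      fun t ht i => (inf'_le _ ht).trans (hmin t i)

/-- Combined lower bound:
`C*(r) ≥ max {LB₁(r), LB₂(r), LB₃(r)}`. -/
theorem combined_lower_bound {m n : ℕ} (hm : 0 < m) (hn : 1 ≤ n)
    (p : Fin m → Fin n → ℝ) (hp : ∀ i j, 0 < p i j)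
    (r : Fin n → ℝ) (hr : ∀ j, 0 ≤ r j) :
    max (LB1 p r) (max (LB2 p r) (LB3 p r)) ≤ Cstar p r :=
  combined_lower_bound_general hm hn p hp r
end
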